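/- Let A ∈ ℚ^{m×n}, b ∈ ℚ^m and k ∈ {1,…,m}. Set (A^{(0)}, b^{(0)}) = (A, b), and for each l ∈ {1,…,k} let A^{(l)} x ≤ b^{(l)} be a restricted projection of A^{(l−1)} x ≤ b^{(l−1)} with respect to the variable x_l (either fmpproj with respect to some designated row i ∈ I⁻_l(A^{(l−1)}) ∪ I⁺_l(A^{(l−1)}) when both index sets are nonempty, or the degenerate restricted projection fmpproj(·,·,l,⊥) otherwise), and let F^{(l)} denote the corresponding projection matrix. Then the product F = F^{(k)} · … · F^{(1)} has linearly independent rows. -/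

import Mathlib

/-- The `k`-th standard unit row vector. -/
def unitRow {ι : Type*} [DecidableEq ι] (k : ι) : ι → ℚ :=
  fun l => if l = k then 1 else 0

/-- The projection matrix of the restricted projection `fmpproj` of `x_j` with respect
to a designated row `i`: its rows, indexed by `i' ≠ i`, are
`(1/A_{i,j})·e_i − (1/A_{i',j})·e_{i'}` for `i' ∈ I⁻_j(A)\{i}`,
`−(1/A_{i,j})·e_i + (1/A_{i',j})·e_{i'}` for `i' ∈ I⁺_j(A)\{i}`, and
`e_{i'}` for `i' ∈ N_j(A)`. -/
def projMatrix {ι : Type} [DecidableEq ι] {n : ℕ} (A : Matrix ι (Fin n) ℚ)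
    (j : Fin n) (i : ι) :
    Matrix {i' : ι // i' ≠ i} ι ℚ :=
  Matrix.of fun i' =>
    if A i'.1 j < 0 then (A i j)⁻¹ • unitRow i - (A i'.1 j)⁻¹ • unitRow i'.1
    else if 0 < A i'.1 j then (A i'.1 j)⁻¹ • unitRow i'.1 - (A i j)⁻¹ • unitRow i
    else unitRow i'.1

/-- The projection matrix of the degenerate restricted projection `fmpproj(·,·,j,⊥)`:
one row `e_{i'}` for each `i' ∈ N_j(A)`. -/
def degMatrix {ι : Type} [DecidableEq ι] {n : ℕ} (A : Matrix ι (Fin n) ℚ) (j : Fin n) :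
    Matrix {i' : ι // A i' j = 0} ι ℚ :=
  Matrix.of fun i' => unitRow i'.1

/-- A system of linear constraints `A x ≤ b` with an arbitrary finite row index type. -/
structure LinSys (n : ℕ) where
  ι : Type
  fin : Fintype ι
  dec : DecidableEq ι
  A : Matrix ι (Fin n) ℚ
  b : ι → ℚ

attribute [instance] LinSys.fin LinSys.dec

/-- `Step j S T F` holds iff the system `T` is a restricted projection of the system `S`
with respect to the variable `x_j`, with projection matrix `F` (either `fmpproj` w.r.t.
some designated row `i ∈ I⁻_j ∪ I⁺_j` when both index sets are nonempty, or the
degenerate restricted projection `fmpproj(·,·,j,⊥)` otherwise). -/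
inductive Step {n : ℕ} (j : Fin n) : (S T : LinSys n) → ∀ (_F : Matrix T.ι S.ι ℚ), Prop
  | designated (S : LinSys n) (i : S.ι)
      (hl : ∃ ℓ, S.A ℓ j < 0) (hu : ∃ u, 0 < S.A u j)
      (hi : S.A i j < 0 ∨ 0 < S.A i j) :
      Step j S
        ⟨{i' : S.ι // i' ≠ i}, inferInstance, inferInstance,
          projMatrix S.A j i * S.A, (projMatrix S.A j i).mulVec S.b⟩
        (projMatrix S.A j i)
  | degenerate (S : LinSys n)
      (h : (¬ ∃ ℓ, S.A ℓ j < 0) ∨ (¬ ∃ u, 0 < S.A u j)) :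
      Step j S
        ⟨{i' : S.ι // S.A i' j = 0}, inferInstance, inferInstance,
          degMatrix S.A j * S.A, (degMatrix S.A j).mulVec S.b⟩
        (degMatrix S.A j)

/-- `Chain S0 k S F` holds iff `S` is obtained from `S0` by `k` successive restricted
projections, eliminating the variables `x_1, …, x_k` in this order, and
`F = F^(k) ⋯ F^(1)` is the product of the corresponding projection matrices. -/
inductive Chain {n : ℕ} (S0 : LinSys n) : ℕ → (S : LinSys n) → ∀ (_F : Matrix S.ι S0.ι ℚ), Prop
  | zero : Chain S0 0 S0 1
  | succ {k : ℕ} {S T : LinSys n} {G : Matrix S.ι S0.ι ℚ} {F : Matrix T.ι S.ι ℚ}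
      (hc : Chain S0 k S G) (hk : k < n) (hs : Step ⟨k, hk⟩ S T F) :
      Chain S0 (k + 1) T (F * G)

/-!
Each row of a projection matrix has a pivot: the column of the original constraint it is
indexed by, in which it is the only nonzero row. Hence every projection matrix has linearly
independent rows, and so does a product of such matrices, since `v ↦ v ᵥ* (F * G)` is the
composite of the injective maps `v ↦ v ᵥ* F` and `w ↦ w ᵥ* G`.
-/

namespace Matrix

variable {R ι κ μ : Type*}

theorem linearIndependent_rows_of_pivot [Ring R] [NoZeroDivisors R] [Fintype ι]
    (M : Matrix ι κ R) (c : ι → κ) (hpivot : ∀ r, M r (c r) ≠ 0)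
    (hzero : ∀ r r', r ≠ r' → M r' (c r) = 0) :
    LinearIndependent R M.row := by
  rw [Fintype.linearIndependent_iff]
  intro g hg r
  have hcol : ∑ r', g r' * M r' (c r) = 0 := by
    simpa only [Finset.sum_apply, Pi.smul_apply, smul_eq_mul, Pi.zero_apply, row_apply]
      using congrFun hg (c r)
  rw [Fintype.sum_eq_single r fun r' hr' => by rw [hzero r r' (Ne.symm hr'), mul_zero]] at hcol
  exact (mul_eq_zero.mp hcol).resolve_right (hpivot r)

theorem linearIndependent_rows_mul [Semiring R] [Fintype ι] [Fintype κ]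
    {F : Matrix ι κ R} {G : Matrix κ μ R}
    (hF : LinearIndependent R F.row) (hG : LinearIndependent R G.row) :
    LinearIndependent R (F * G).row := by
  rw [← vecMul_injective_iff] at hF hG ⊢
  have hcomp : (F * G).vecMul = G.vecMul ∘ F.vecMul := funext fun v => (vecMul_vecMul v F G).symm
  rw [hcomp]
  exact hG.comp hF

end Matrix

section

variable {ι : Type} [DecidableEq ι] {n : ℕ} (A : Matrix ι (Fin n) ℚ) (j : Fin n)

theorem projMatrix_apply_self_ne_zero (i : ι) (r : {i' : ι // i' ≠ i}) :
    projMatrix A j i r r.1 ≠ 0 := by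
  simp only [projMatrix, Matrix.of_apply]
  split_ifs with hneg hpos
  · simp [unitRow, r.2, hneg.ne]
  · simp [unitRow, r.2, hpos.ne']
  · simp [unitRow]

theorem projMatrix_apply_eq_zero_of_ne (i : ι) {r r' : {i' : ι // i' ≠ i}} (h : r ≠ r') :
    projMatrix A j i r' r.1 = 0 := by
  have h' : r.1 ≠ r'.1 := Subtype.val_injective.ne h
  simp only [projMatrix, Matrix.of_apply]
  split_ifs <;> simp [unitRow, r.2, h']

theorem linearIndependent_projMatrix_rows (i : ι) [Fintype ι] :
    LinearIndependent ℚ (projMatrix A j i).row :=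
  Matrix.linearIndependent_rows_of_pivot _ Subtype.val (projMatrix_apply_self_ne_zero A j i)
    fun _ _ => projMatrix_apply_eq_zero_of_ne A j i

theorem linearIndependent_degMatrix_rows [Fintype ι] :
    LinearIndependent ℚ (degMatrix A j).row :=
  Matrix.linearIndependent_rows_of_pivot _ Subtype.val (fun _ => by simp [degMatrix, unitRow])
    fun _ _ h => by simp [degMatrix, unitRow, Subtype.val_injective.ne h]

end

theorem Step.linearIndependent_rows {n : ℕ} {j : Fin n} {S T : LinSys n}
    {F : Matrix T.ι S.ι ℚ} (hs : Step j S T F) : LinearIndependent ℚ F.row := by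
  cases hs with
  | designated i => exact linearIndependent_projMatrix_rows S.A j i
  | degenerate => exact linearIndependent_degMatrix_rows S.A j

theorem Chain.linearIndependent_rows {n k : ℕ} {S0 S : LinSys n} {F : Matrix S.ι S0.ι ℚ}
    (hc : Chain S0 k S F) : LinearIndependent ℚ F.row := by
  induction hc with
  | zero => exact Matrix.linearIndependent_rows_of_isUnit isUnit_one
  | succ _ _ hs ih => exact Matrix.linearIndependent_rows_mul hs.linearIndependent_rows ih

theorem chain_proj_matrix_linearIndependent_general {m n : ℕ} (A : Matrix (Fin m) (Fin n) ℚ)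
    (b : Fin m → ℚ) (k : ℕ)
    (S : LinSys n) (F : Matrix S.ι (Fin m) ℚ)
    (hc : Chain ⟨Fin m, inferInstance, inferInstance, A, b⟩ k S F) :
    LinearIndependent ℚ (fun i => F i) :=
  hc.linearIndependent_rows

/-- The product `F = F^(k) ⋯ F^(1)` of the projection matrices of a sequence of `k`
restricted projections, eliminating variables `x_1, …, x_k`, starting from
`A x ≤ b` with `A ∈ ℚ^{m×n}`, `b ∈ ℚ^m` and `1 ≤ k ≤ m`, has linearly independent rows. -/
theorem chain_proj_matrix_linearIndependent {m n : ℕ} (A : Matrix (Fin m) (Fin n) ℚ)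
    (b : Fin m → ℚ) (k : ℕ) (hk1 : 1 ≤ k) (hkm : k ≤ m)
    (S : LinSys n) (F : Matrix S.ι (Fin m) ℚ)
    (hc : Chain ⟨Fin m, inferInstance, inferInstance, A, b⟩ k S F) :
    LinearIndependent ℚ (fun i => F i) :=
  chain_proj_matrix_linearIndependent_general A b k S F hc
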